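/- Let L be a finite atomistic lattice such that there is no pair of join-irreducible elements a, b with a D b and b D a. If L embeds into Co(P) for some poset P, then L embeds into Co(Q) for some poset Q of length at most 2; in particular, L then has no D-cycle at all (no finite sequence p_0 D p_1 D ⋯ D p_{k-1} D p_0 of join-irreducible elements). -/

import Mathlib

/-! Common definitions: lattices of order-convex subsets of a poset,
length of a poset, the identities (S), (U), (B), (L2), (H_n), (H_{m,n}),
join-irreducibility, the join-dependency relation, join-seeds,
the posets P_{I,J}, tree-like posets, D-closed sets,
and complete lattice congruences. -/

open Set

/-- The lattice `Co P` of all order-convex subsets of a poset `P`. -/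
def Co (P : Type*) [PartialOrder P] : Type _ := {s : Set P // s.OrdConnected}

namespace Co

variable {P : Type*} [PartialOrder P]

instance : PartialOrder (Co P) := Subtype.partialOrder _

instance : InfSet (Co P) :=
  ⟨fun S => ⟨⋂ s ∈ S, s.1, Set.ordConnected_biInter fun s _ => s.2⟩⟩

noncomputable instance : CompleteLattice (Co P) :=
  completeLatticeOfInf (Co P) (by
    intro S
    constructor
    · intro t ht
      exact Set.biInter_subset_of_mem (t := fun s => s.1) ht
    · intro b hb
      exact Set.subset_iInter₂ fun t ht => hb ht)

/-- The order-convex subset of `P` with underlying set `X`. -/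
def mk' (X : Set P) (hX : X.OrdConnected) : Co P := ⟨X, hX⟩

/-- The singleton `{p}`, as an order-convex set. -/
def sngl (p : P) : Co P := ⟨{p}, Set.ordConnected_singleton⟩

/-- The empty order-convex set. -/
def emp : Co P := ⟨∅, Set.ordConnected_empty⟩

end Co

/-- `lengthLE P n` states that the poset `P` has length at most `n`, that is,
every finite chain of `P` has at most `n + 1` elements. -/
def lengthLE (P : Type*) [PartialOrder P] (n : ℕ) : Prop :=
  ∀ C : Finset P, IsChain (· ≤ ·) (C : Set P) → C.card ≤ n + 1

section Identities

/-- The Stirlitz identity (S). -/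
def IdS (L : Type*) [Lattice L] : Prop :=
  ∀ a b b₀ b₁ c : L,
    a ⊓ ((b ⊓ (b₀ ⊔ b₁)) ⊔ c) =
      (a ⊓ (b ⊓ (b₀ ⊔ b₁)))
      ⊔ (a ⊓ (b₀ ⊔ c) ⊓ ((b ⊓ (b₀ ⊔ b₁) ⊓ (a ⊔ b₀)) ⊔ c))
      ⊔ (a ⊓ (b₁ ⊔ c) ⊓ ((b ⊓ (b₀ ⊔ b₁) ⊓ (a ⊔ b₁)) ⊔ c))

/-- The Udav identity (U). -/
def IdU (L : Type*) [Lattice L] : Prop :=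
  ∀ x x₀ x₁ x₂ : L,
    x ⊓ (x₀ ⊔ x₁) ⊓ (x₁ ⊔ x₂) ⊓ (x₀ ⊔ x₂) =
      (x ⊓ x₀ ⊓ (x₁ ⊔ x₂)) ⊔ (x ⊓ x₁ ⊓ (x₀ ⊔ x₂)) ⊔ (x ⊓ x₂ ⊓ (x₀ ⊔ x₁))

/-- The Bond identity (B). -/
def IdB (L : Type*) [Lattice L] : Prop :=
  ∀ x a₀ a₁ b₀ b₁ : L,
    x ⊓ (a₀ ⊔ a₁) ⊓ (b₀ ⊔ b₁) =
      (x ⊓ a₀ ⊓ (b₀ ⊔ b₁)) ⊔ (x ⊓ a₁ ⊓ (b₀ ⊔ b₁))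
      ⊔ (x ⊓ b₀ ⊓ (a₀ ⊔ a₁)) ⊔ (x ⊓ b₁ ⊓ (a₀ ⊔ a₁))
      ⊔ (x ⊓ (a₀ ⊔ a₁) ⊓ (b₀ ⊔ b₁) ⊓ (a₀ ⊔ b₀) ⊓ (a₁ ⊔ b₁))
      ⊔ (x ⊓ (a₀ ⊔ a₁) ⊓ (b₀ ⊔ b₁) ⊓ (a₀ ⊔ b₁) ⊓ (a₁ ⊔ b₀))

/-- The identity (L₂). -/
def IdL2 (L : Type*) [Lattice L] : Prop :=
  ∀ a b b' c c' : L,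
    a ⊓ ((b ⊓ (c ⊔ c')) ⊔ b') =
      (a ⊓ b ⊓ (c ⊔ c')) ⊔ (a ⊓ ((b ⊓ c) ⊔ b')) ⊔ (a ⊓ ((b ⊓ c') ⊔ b'))

variable {L : Type*} [Lattice L]

/-- The lattice polynomial `U_{i,n}` (in the variables `x₀, …, xₙ, x'₁, …, x'ₙ`). -/
def Upoly (x x' : ℕ → L) (n : ℕ) (i : ℕ) : L :=
  if h : n ≤ i then x n
  else x i ⊓ (Upoly x x' n (i + 1) ⊔ x' (i + 1))
  termination_by n - i
  decreasing_by omega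

/-- The lattice polynomial `V_{i,j,n}`. -/
def Vpoly (x x' : ℕ → L) (n i : ℕ) (j : ℕ) : L :=
  if h : i ≤ j then (x i ⊓ Upoly x x' n (i + 1)) ⊔ (x i ⊓ x' (i + 1))
  else x j ⊓ (Vpoly x x' n i (j + 1) ⊔ x' (j + 1))
  termination_by i - j
  decreasing_by omega

/-- The lattice polynomial `W_{i,j,n}`. -/
def Wpoly (x x' : ℕ → L) (n i : ℕ) (j : ℕ) : L :=
  if h : i ≤ j then
    x i ⊓ (x' (i + 1) ⊔ x' (i + 2)) ⊓ ((Upoly x x' n (i + 1) ⊓ (x i ⊔ x' (i + 2))) ⊔ x' (i + 1))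
  else x j ⊓ (Wpoly x x' n i (j + 1) ⊔ x' (j + 1))
  termination_by i - j
  decreasing_by omega

/-- `bigJoin f k = f 0 ⊔ f 1 ⊔ ⋯ ⊔ f k`. -/
def bigJoin (f : ℕ → L) : ℕ → L
  | 0 => f 0
  | k + 1 => bigJoin f k ⊔ f (k + 1)

end Identities

/-- The identity (Hₙ) : `Uₙ = ⋁_{0 ≤ i ≤ n-1} V_{i,n} ∨ ⋁_{0 ≤ i ≤ n-2} W_{i,n}`
(intended for `n ≥ 1`). -/
def IdH (n : ℕ) (L : Type*) [Lattice L] : Prop :=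
  ∀ x x' : ℕ → L,
    Upoly x x' n 0 =
      bigJoin (fun i =>
        if i + 2 ≤ n then Vpoly x x' n i 0 ⊔ Wpoly x x' n i 0 else Vpoly x x' n i 0) (n - 1)

/-- The identity (H_{m,n}) (intended for `m, n ≥ 1`); the common base point is
`x 0 = y 0 = t`. -/
def IdHmn (m n : ℕ) (L : Type*) [Lattice L] : Prop :=
  ∀ x x' y y' : ℕ → L, x 0 = y 0 →
    Upoly x x' m 0 ⊓ Upoly y y' n 0 =
      bigJoin (fun i =>
          if i + 2 ≤ m then
            (Vpoly x x' m i 0 ⊓ Upoly y y' n 0) ⊔ (Wpoly x x' m i 0 ⊓ Upoly y y' n 0)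
          else Vpoly x x' m i 0 ⊓ Upoly y y' n 0) (m - 1)
      ⊔ bigJoin (fun j =>
          if j + 2 ≤ n then
            (Upoly x x' m 0 ⊓ Vpoly y y' n j 0) ⊔ (Upoly x x' m 0 ⊓ Wpoly y y' n j 0)
          else Upoly x x' m 0 ⊓ Vpoly y y' n j 0) (n - 1)
      ⊔ (Upoly x x' m 0 ⊓ Upoly y y' n 0 ⊓ (x 1 ⊔ y' 1) ⊓ (x' 1 ⊔ y 1))

/-- `p` is join-irreducible: `p = x ⊔ y` implies `p = x` or `p = y`. -/
def JIrr {L : Type*} [Lattice L] (p : L) : Prop :=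
  ∀ x y : L, p = x ⊔ y → p = x ∨ p = y

/-- The join-dependency relation `p D q`. -/
def DRel {L : Type*} [Lattice L] (p q : L) : Prop :=
  p ≠ q ∧ ∃ x : L, p ≤ q ⊔ x ∧ ∀ y < q, ¬ p ≤ y ⊔ x

/-- A subset `S` of a lattice `L` is a join-seed. -/
def JoinSeed (L : Type*) [Lattice L] (S : Set L) : Prop :=
  (∀ p ∈ S, JIrr p) ∧
  (∀ a : L, ∃ T ⊆ S, IsLUB T a) ∧
  (∀ p ∈ S, ∀ a b : L, p ≤ a ⊔ b → ¬ p ≤ a → ¬ p ≤ b →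
    ∃ x ∈ S, ∃ y ∈ S, x ≤ a ∧ y ≤ b ∧ p ≤ x ⊔ y ∧
      (∀ x' < x, ¬ p ≤ x' ⊔ y) ∧ (∀ y' < y, ¬ p ≤ x ⊔ y'))

/-- The poset `P_{I,J} = I ∪ {p} ∪ J`, where every element of `I` is below `p`,
`p` is below every element of `J`, every element of `I` is below every element
of `J`, and there are no other strict comparabilities. -/
def PIJ (I J : Type*) : Type _ := I ⊕ (Unit ⊕ J)

namespace PIJ

variable {I J : Type*}

/-- The rank (height) of an element of `P_{I,J}`. -/
def rank (a : PIJ I J) : ℕ :=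
  Sum.elim (fun _ => 0) (Sum.elim (fun _ => 1) fun _ => 2) a

instance : PartialOrder (PIJ I J) where
  le a b := a = b ∨ rank a < rank b
  le_refl a := Or.inl rfl
  le_trans a b c hab hbc := by
    rcases hab with rfl | h
    · exact hbc
    · rcases hbc with rfl | h'
      · exact Or.inr h
      · exact Or.inr (h.trans h')
  le_antisymm a b hab hba := by
    rcases hab with rfl | h
    · rfl
    · rcases hba with rfl | h'
      · rfl
      · omega

end PIJ

/-- A poset is tree-like if it has no infinite bounded chain and between any two
points there is at most one repetition-free finite path with respect to the
covering relation. -/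
def TreeLike (P : Type*) [PartialOrder P] : Prop :=
  (∀ C : Set P, IsChain (· ≤ ·) C → BddAbove C → BddBelow C → C.Finite) ∧
  (∀ a b : P, ∀ l₁ l₂ : List P,
    l₁.Nodup → l₁.head? = some a → l₁.getLast? = some b →
      l₁.Chain' (fun u v => u ⋖ v ∨ v ⋖ u) →
    l₂.Nodup → l₂.head? = some a → l₂.getLast? = some b →
      l₂.Chain' (fun u v => u ⋖ v ∨ v ⋖ u) →
    l₁ = l₂)

/-- A subset `U` of a poset `P` is `D`-closed. -/
def DClosed {P : Type*} [PartialOrder P] (U : Set P) : Prop :=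
  ∀ x p y : P, x < p → p < y → (x ∈ U ∨ y ∈ U) → p ∈ U

/-- A complete congruence of a complete lattice. -/
structure IsCompleteCongr {L : Type*} [CompleteLattice L] (θ : L → L → Prop) : Prop where
  refl : ∀ x, θ x x
  symm : ∀ {x y}, θ x y → θ y x
  trans : ∀ {x y z}, θ x y → θ y z → θ x z
  sup : ∀ {a b c d}, θ a b → θ c d → θ (a ⊔ c) (b ⊔ d)
  inf : ∀ {a b c d}, θ a b → θ c d → θ (a ⊓ c) (b ⊓ d)
  cSup : ∀ (x : L) (Y : Set L), Y.Nonempty → (∀ y ∈ Y, θ x y) → θ x (sSup Y)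
  cInf : ∀ (x : L) (Y : Set L), Y.Nonempty → (∀ y ∈ Y, θ x y) → θ x (sInf Y)

/-- The map `h_U : Co(P) → Co(P ∖ U)`, `X ↦ X ∖ U`. -/
def coRestrict {P : Type*} [PartialOrder P] (U : Set P) (X : Co P) :
    Co {p : P // p ∉ U} :=
  ⟨Subtype.val ⁻¹' X.1, by
    constructor
    rintro a ha b hb z hz
    exact X.2.out ha hb ⟨hz.1, hz.2⟩⟩

/-- The lattice `D(P)` of all `D`-closed subsets of a poset `P`. -/
def DSub (P : Type*) [PartialOrder P] : Type _ := {U : Set P // DClosed U}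

namespace DSub

variable {P : Type*} [PartialOrder P]

instance : PartialOrder (DSub P) := Subtype.partialOrder _

instance : InfSet (DSub P) :=
  ⟨fun S => ⟨⋂ U ∈ S, U.1, by
    intro x p y h1 h2 h3
    simp only [Set.mem_iInter] at h3 ⊢
    intro U hU
    exact U.2 x p y h1 h2 (h3.imp (fun h => h U hU) fun h => h U hU)⟩⟩

noncomputable instance : CompleteLattice (DSub P) :=
  completeLatticeOfInf (DSub P) (by
    intro S
    constructor
    · intro t ht
      exact Set.biInter_subset_of_mem (t := fun U => U.1) ht
    · intro b hb
      exact Set.subset_iInter₂ fun t ht => hb ht)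

end DSub

/-!
Fix an embedding `f : L → Co P` and, for every atom `c`, a point `ρ c ∈ f c \ f ⊥`; such a point
lies in `f x` exactly when `c ≤ x`. If `c ≤ a ⊔ b` for atoms `a, b ≠ c`, then `ρ c` lies strictly
between a point of `f a` and a point of `f b`: one of `a, b` reaches below `ρ c`, the other above.
Such an endpoint `a` is not itself below the join of two other atoms `u, v`: the point of `f a`
below `ρ c` lies above a point of `f u` or `f v`, which produces the 2-cycle `a D c D a`.

So `Q` can be built in three levels: every atom in the middle, and the atoms that are not below
the join of two others once at the bottom and once at the top, `a` below `c` when `f a` reaches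
below `ρ c` and `b` above `c` when `f b` reaches above it. Then `x ↦ {q | q.atom ≤ x}` embeds `L`
into `Co Q`.

For atoms, `a D b` makes `b` an endpoint of a relation `a ≤ b ⊔ e`, while `b D c` puts `b` below
the join of two other atoms; so there is no path `a D b D c` of atoms, and in a finite atomistic
lattice the members of a `D`-cycle are atoms.
-/

namespace Co

variable {P : Type*} [PartialOrder P]

instance : Membership P (Co P) := ⟨fun X p => p ∈ X.1⟩

theorem mem_of_le {X Y : Co P} (h : X ≤ Y) {p : P} (hp : p ∈ X) : p ∈ Y := h hp

theorem mem_inf {X Y : Co P} {p : P} : p ∈ X ⊓ Y ↔ p ∈ X ∧ p ∈ Y := by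
  let Z : Co P := ⟨X.1 ∩ Y.1, X.2.inter Y.2⟩
  refine ⟨fun h => ⟨mem_of_le inf_le_left h, mem_of_le inf_le_right h⟩, fun h => ?_⟩
  have hZ : Z ≤ X ⊓ Y := le_inf (show Z ≤ X from inter_subset_left) inter_subset_right
  exact mem_of_le hZ (show p ∈ Z from h)

theorem mem_sup {X Y : Co P} {p : P} :
    p ∈ X ⊔ Y ↔ ∃ u ∈ X.1 ∪ Y.1, ∃ v ∈ X.1 ∪ Y.1, u ≤ p ∧ p ≤ v := by
  let H : Co P := ⟨{z | ∃ u ∈ X.1 ∪ Y.1, ∃ v ∈ X.1 ∪ Y.1, u ≤ z ∧ z ≤ v}, ⟨by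
    rintro a ⟨u, hu, -, -, hua, -⟩ b ⟨-, -, v, hv, -, hbv⟩ z hz
    exact ⟨u, hu, v, hv, hua.trans hz.1, hz.2.trans hbv⟩⟩⟩
  have hXY : X.1 ∪ Y.1 ⊆ (X ⊔ Y).1 :=
    union_subset (le_sup_left (b := Y)) (le_sup_right (a := X))
  refine ⟨fun h => mem_of_le (sup_le (b := Y) (c := H) ?_ ?_) h, ?_⟩
  · exact fun z hz => ⟨z, Or.inl hz, z, Or.inl hz, le_rfl, le_rfl⟩
  · exact fun z hz => ⟨z, Or.inr hz, z, Or.inr hz, le_rfl, le_rfl⟩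
  · rintro ⟨u, hu, v, hv, hup, hpv⟩
    exact (X ⊔ Y).2.out (hXY hu) (hXY hv) ⟨hup, hpv⟩

theorem mem_sup_of_le_of_le {X Y : Co P} {u v p : P} (hu : u ∈ X) (hv : v ∈ Y)
    (hup : u ≤ p) (hpv : p ≤ v) : p ∈ X ⊔ Y :=
  mem_sup.2 ⟨u, Or.inl hu, v, Or.inr hv, hup, hpv⟩

theorem exists_lt_lt_of_mem_sup {X Y : Co P} {p : P} (h : p ∈ X ⊔ Y) (hX : p ∉ X)
    (hY : p ∉ Y) : ∃ u ∈ X, ∃ v ∈ Y, u < p ∧ p < v ∨ v < p ∧ p < u := by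
  obtain ⟨u, hu, v, hv, hup, hpv⟩ := mem_sup.1 h
  have hXY : ∀ z ∈ X.1 ∪ Y.1, z ≠ p := by rintro z (hz | hz) rfl <;> contradiction
  have hup := lt_of_le_of_ne hup (hXY u hu)
  have hpv := lt_of_le_of_ne' hpv (hXY v hv)
  rcases hu with hu | hu <;> rcases hv with hv | hv
  · exact absurd (X.2.out hu hv ⟨hup.le, hpv.le⟩) hX
  · exact ⟨u, hu, v, hv, Or.inl ⟨hup, hpv⟩⟩
  · exact ⟨v, hv, u, hu, Or.inr ⟨hup, hpv⟩⟩
  · exact absurd (Y.2.out hu hv ⟨hup.le, hpv.le⟩) hY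

def dualIso : Co P ≃o Co Pᵒᵈ where
  toFun X := ⟨OrderDual.ofDual ⁻¹' X.1, X.2.dual⟩
  invFun X := ⟨OrderDual.toDual ⁻¹' X.1, X.2.dual⟩
  left_inv _ := rfl
  right_inv _ := rfl
  map_rel_iff' := Iff.rfl

end Co

section Lattice

variable {L : Type*} [Lattice L] [OrderBot L]

theorem IsAtomistic.sup_induction [Finite L] [IsAtomistic L] {p : L → Prop} (bot : p ⊥)
    (atom : ∀ a, IsAtom a → p a) (sup : ∀ x, p x → ∀ y, p y → p (x ⊔ y)) (x : L) : p x := by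
  let s := (Set.toFinite {a : L | IsAtom a ∧ a ≤ x}).toFinset
  have hs : s.sup id = x := by
    refine le_antisymm (Finset.sup_le fun a ha => ((Set.Finite.mem_toFinset _).1 ha).2) ?_
    exact (isLUB_atoms_le x).2 fun a ha =>
      Finset.le_sup (f := id) ((Set.Finite.mem_toFinset _).2 ha)
  rw [← hs]
  exact Finset.sup_induction bot sup fun a ha => atom a ((Set.Finite.mem_toFinset _).1 ha).1

theorem JIrr.isAtom [Finite L] [IsAtomistic L] {q : L} (hq : JIrr q) (h : q ≠ ⊥) :
    IsAtom q := by
  refine IsAtomistic.sup_induction (p := fun y => y = q → IsAtom q) (fun e => absurd e.symm h)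
    (fun a ha e => e ▸ ha) (fun x hx y hy e => ?_) q rfl
  rcases hq x y e.symm with e' | e'
  exacts [hx e'.symm, hy e'.symm]

theorem IsAtom.jIrr {a : L} (ha : IsAtom a) : JIrr a := by
  intro x y h
  rcases ha.le_iff.1 (h ▸ le_sup_left : x ≤ a) with rfl | hx
  · exact Or.inr (by rwa [bot_sup_eq] at h)
  · exact Or.inl hx.symm

theorem DRel.ne_bot {a b : L} (h : DRel a b) : a ≠ ⊥ := by
  rintro rfl
  obtain ⟨hab, x, -, hx⟩ := h
  exact hx ⊥ (bot_lt_iff_ne_bot.2 (Ne.symm hab)) bot_le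

theorem drel_iff_of_isAtom {a c : L} (hc : IsAtom c) :
    DRel a c ↔ a ≠ c ∧ ∃ x, a ≤ c ⊔ x ∧ ¬ a ≤ x := by
  simp only [DRel, hc.lt_iff, forall_eq, bot_sup_eq]

theorem not_exists_drel_cycle [Finite L] [IsAtomistic L]
    (h : ∀ a b c : L, IsAtom a → IsAtom b → IsAtom c → DRel a b → ¬ DRel b c) :
    ¬ ∃ (k : ℕ) (p : ℕ → L), 0 < k ∧ (∀ i ≤ k, JIrr (p i)) ∧
        (∀ i < k, DRel (p i) (p (i + 1))) ∧ p k = p 0 := by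
  rintro ⟨k, p, hk, hJ, hD, hcyc⟩
  have hatom : ∀ i < k, IsAtom (p i) := fun i hi => (hJ i hi.le).isAtom (hD i hi).ne_bot
  obtain rfl | hk := (Nat.one_le_of_lt hk).eq_or_lt
  · exact (hD 0 hk).1 hcyc.symm
  have h2 : IsAtom (p 2) := by
    obtain rfl | hk := (Nat.succ_le_of_lt hk).eq_or_lt
    exacts [hcyc ▸ hatom 0 (by omega), hatom 2 hk]
  exact h _ _ _ (hatom 0 (by omega)) (hatom 1 hk) h2 (hD 0 (by omega)) (hD 1 hk)

end Lattice

section Embedding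

variable {L P : Type*} [Lattice L] [PartialOrder P] (f : LatticeHom L (Co P))

noncomputable def LatticeHom.coDual : LatticeHom L (Co Pᵒᵈ) :=
  (Co.dualIso (P := P) : LatticeHom (Co P) (Co Pᵒᵈ)).comp f

theorem mem_map_of_le {x y : L} (h : x ≤ y) {p : P} (hp : p ∈ f x) : p ∈ f y :=
  Co.mem_of_le (OrderHomClass.mono f h) hp

theorem mem_map_sup_of_le_of_le {x y : L} {u v p : P} (hu : u ∈ f x) (hv : v ∈ f y)
    (hup : u ≤ p) (hpv : p ≤ v) : p ∈ f (x ⊔ y) := by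
  rw [map_sup]; exact Co.mem_sup_of_le_of_le hu hv hup hpv

variable [OrderBot L]

theorem IsAtom.le_of_mem_map {a x : L} (ha : IsAtom a) {p : P} (hpa : p ∈ f a) (hpx : p ∈ f x)
    (hp : p ∉ f ⊥) : a ≤ x := by
  by_contra h
  have hp' : p ∈ f (a ⊓ x) := by rw [map_inf]; exact Co.mem_inf.2 ⟨hpa, hpx⟩
  rw [(ha.not_le_iff_disjoint.1 h).eq_bot] at hp'
  exact hp hp'

theorem exists_mem_map_not_mem_map_bot (hf : Function.Injective f) {a : L} (ha : IsAtom a) :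
    ∃ r ∈ f a, r ∉ f ⊥ := by
  by_contra! h
  exact ha.1 (hf (le_antisymm h (OrderHomClass.mono f bot_le)))

section Atomistic

variable [Finite L] [IsAtomistic L]

theorem exists_mem_map_le {x : L} {p : P} (hp : p ∈ f x) :
    ∃ a ≤ x, (a = ⊥ ∨ IsAtom a) ∧ ∃ u ∈ f a, u ≤ p := by
  induction x using IsAtomistic.sup_induction generalizing p with
  | bot => exact ⟨⊥, le_rfl, Or.inl rfl, p, hp, le_rfl⟩
  | atom a ha => exact ⟨a, le_rfl, Or.inr ha, p, hp, le_rfl⟩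
  | sup x hx y hy =>
    rw [map_sup] at hp
    obtain ⟨u, hu | hu, -, -, hup, -⟩ := Co.mem_sup.1 hp
    · obtain ⟨a, hax, ha, u', hu', hu'u⟩ := hx hu
      exact ⟨a, hax.trans le_sup_left, ha, u', hu', hu'u.trans hup⟩
    · obtain ⟨a, hay, ha, u', hu', hu'u⟩ := hy hu
      exact ⟨a, hay.trans le_sup_right, ha, u', hu', hu'u.trans hup⟩

theorem exists_mem_map_ge {x : L} {p : P} (hp : p ∈ f x) :
    ∃ a ≤ x, (a = ⊥ ∨ IsAtom a) ∧ ∃ v ∈ f a, p ≤ v :=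
  exists_mem_map_le f.coDual hp

theorem exists_atoms_le_sup_of_le_of_le {c x y : L} (hc : IsAtom c) {r u v : P}
    (hrc : r ∈ f c) (hr : r ∉ f ⊥) (hx : ¬ c ≤ x) (hy : ¬ c ≤ y) (hu : u ∈ f x)
    (hv : v ∈ f y) (hur : u ≤ r) (hrv : r ≤ v) :
    ∃ a b, IsAtom a ∧ IsAtom b ∧ a ≤ x ∧ b ≤ y ∧ c ≤ a ⊔ b := by
  obtain ⟨a, hax, ha, u', hu', hu'u⟩ := exists_mem_map_le f hu
  obtain ⟨b, hby, hb, v', hv', hvv'⟩ := exists_mem_map_ge f hv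
  have hcab : c ≤ a ⊔ b := hc.le_of_mem_map f hrc
    (mem_map_sup_of_le_of_le f hu' hv' (hu'u.trans hur) (hrv.trans hvv')) hr
  rcases ha with rfl | ha
  · exact absurd ((bot_sup_eq b ▸ hcab).trans hby) hy
  rcases hb with rfl | hb
  · exact absurd ((sup_bot_eq a ▸ hcab).trans hax) hx
  exact ⟨a, b, ha, hb, hax, hby, hcab⟩

theorem exists_atoms_le_sup (hf : Function.Injective f) {c x y : L} (hc : IsAtom c)
    (h : c ≤ x ⊔ y) (hx : ¬ c ≤ x) (hy : ¬ c ≤ y) :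
    ∃ a b, IsAtom a ∧ IsAtom b ∧ a ≤ x ∧ b ≤ y ∧ c ≤ a ⊔ b := by
  obtain ⟨r, hrc, hr⟩ := exists_mem_map_not_mem_map_bot f hf hc
  have hrxy : r ∈ f x ⊔ f y := by rw [← map_sup]; exact mem_map_of_le f h hrc
  obtain ⟨u, hu, v, hv, ⟨hur, hrv⟩ | ⟨hvr, hru⟩⟩ := Co.exists_lt_lt_of_mem_sup hrxy
    (fun h => hx (hc.le_of_mem_map f hrc h hr)) (fun h => hy (hc.le_of_mem_map f hrc h hr))
  · exact exists_atoms_le_sup_of_le_of_le f hc hrc hr hx hy hu hv hur.le hrv.le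
  · obtain ⟨b, a, hb, ha, hby, hax, hcba⟩ :=
      exists_atoms_le_sup_of_le_of_le f hc hrc hr hy hx hv hu hvr.le hru.le
    exact ⟨a, b, ha, hb, hax, hby, sup_comm b a ▸ hcba⟩

end Atomistic

def PicksPrivatePoints (ρ : L → P) : Prop := ∀ c, IsAtom c → ρ c ∈ f c ∧ ρ c ∉ f ⊥

def ReachesBelow (ρ : L → P) (c a : L) : Prop := ∃ p ∈ f a, p < ρ c

def ReachesAbove (ρ : L → P) (c a : L) : Prop := ∃ q ∈ f a, ρ c < q

def IsBetweenAtoms (c : L) : Prop := ∃ a b, IsAtom a ∧ IsAtom b ∧ a ≠ c ∧ b ≠ c ∧ c ≤ a ⊔ b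

theorem exists_picksPrivatePoints [Nonempty P] (hf : Function.Injective f) :
    ∃ ρ : L → P, PicksPrivatePoints f ρ := by
  have h (c : L) : ∃ r : P, IsAtom c → r ∈ f c ∧ r ∉ f ⊥ := by
    by_cases hc : IsAtom c
    · obtain ⟨r, hr⟩ := exists_mem_map_not_mem_map_bot f hf hc
      exact ⟨r, fun _ => hr⟩
    · exact ⟨Classical.arbitrary P, fun h => absurd h hc⟩
  exact ⟨fun c => (h c).choose, fun c => (h c).choose_spec⟩

namespace PicksPrivatePoints

variable {f} {ρ : L → P} (hρ : PicksPrivatePoints f ρ)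
include hρ

theorem coDual : PicksPrivatePoints f.coDual (OrderDual.toDual ∘ ρ) := hρ

theorem eq_of_mem {a c : L} (hc : IsAtom c) (ha : IsAtom a) (h : ρ c ∈ f a) : c = a :=
  (ha.le_iff_eq hc.1).1 (hc.le_of_mem_map f (hρ c hc).1 h (hρ c hc).2)

theorem le_sup {a b c : L} (hc : IsAtom c) (ha : ReachesBelow f ρ c a)
    (hb : ReachesAbove f ρ c b) : c ≤ a ⊔ b := by
  obtain ⟨p, hpa, hpc⟩ := ha
  obtain ⟨q, hqb, hcq⟩ := hb
  exact hc.le_of_mem_map f (hρ c hc).1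
    (mem_map_sup_of_le_of_le f hpa hqb hpc.le hcq.le) (hρ c hc).2

theorem reachesBelow_and_reachesAbove_of_le_sup {a b c : L} (hc : IsAtom c) (ha : IsAtom a)
    (hb : IsAtom b) (hac : a ≠ c) (hbc : b ≠ c) (h : c ≤ a ⊔ b) :
    ReachesBelow f ρ c a ∧ ReachesAbove f ρ c b ∨
      ReachesBelow f ρ c b ∧ ReachesAbove f ρ c a := by
  have hab : ρ c ∈ f a ⊔ f b := by rw [← map_sup]; exact mem_map_of_le f h (hρ c hc).1
  obtain ⟨u, hu, v, hv, h | h⟩ := Co.exists_lt_lt_of_mem_sup hab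
    (fun h => hac (hρ.eq_of_mem hc ha h).symm) (fun h => hbc (hρ.eq_of_mem hc hb h).symm)
  exacts [Or.inl ⟨⟨u, hu, h.1⟩, v, hv, h.2⟩, Or.inr ⟨⟨v, hv, h.1⟩, u, hu, h.2⟩]

theorem not_isBetweenAtoms_of_reachesBelow
    (hD : ∀ a b : L, IsAtom a → IsAtom b → DRel a b → ¬ DRel b a) {a b c : L} (hc : IsAtom c)
    (ha : IsAtom a) (hb : IsAtom b) (hac : a ≠ c) (hbc : b ≠ c) (hca : ReachesBelow f ρ c a)
    (hcb : ReachesAbove f ρ c b) : ¬ IsBetweenAtoms a := by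
  obtain ⟨p, hpa, hpc⟩ := hca
  obtain ⟨q, hqb, hcq⟩ := id hcb
  have hp : p ∉ f ⊥ := fun hp => hbc (hρ.eq_of_mem hc hb
    (bot_sup_eq b ▸ mem_map_sup_of_le_of_le f hp hqb hpc.le hcq.le)).symm
  rintro ⟨u, v, hu, hv, hua, hva, hauv⟩
  have hnot : ∀ w, IsAtom w → w ≠ a → p ∉ f w := fun w hw hwa h =>
    hwa ((hw.le_iff_eq ha.1).1 (ha.le_of_mem_map f hpa h hp)).symm
  obtain ⟨w, hw, hwa, s, hs, hsp⟩ : ∃ w, IsAtom w ∧ w ≠ a ∧ ∃ s ∈ f w, s < p := by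
    have hpuv : p ∈ f u ⊔ f v := by rw [← map_sup]; exact mem_map_of_le f hauv hpa
    obtain ⟨s, hs, t, ht, h | h⟩ :=
      Co.exists_lt_lt_of_mem_sup hpuv (hnot u hu hua) (hnot v hv hva)
    exacts [⟨u, hu, hua, s, hs, h.1⟩, ⟨v, hv, hva, t, ht, h.1⟩]
  have hacw : a ≤ c ⊔ w := sup_comm w c ▸
    ha.le_of_mem_map f hpa (mem_map_sup_of_le_of_le f hs (hρ c hc).1 hsp.le hpc.le) hp
  refine hD a c ha hc ((drel_iff_of_isAtom hc).2 ⟨hac, w, hacw, fun h => hwa ?_⟩)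
    ((drel_iff_of_isAtom ha).2 ⟨hac.symm, b, hρ.le_sup hc ⟨p, hpa, hpc⟩ hcb, fun h => hbc ?_⟩)
  · exact ((hw.le_iff_eq ha.1).1 h).symm
  · exact ((hb.le_iff_eq hc.1).1 h).symm

theorem not_isBetweenAtoms_of_reachesAbove
    (hD : ∀ a b : L, IsAtom a → IsAtom b → DRel a b → ¬ DRel b a) {a b c : L} (hc : IsAtom c)
    (ha : IsAtom a) (hb : IsAtom b) (hac : a ≠ c) (hbc : b ≠ c) (hca : ReachesBelow f ρ c a)
    (hcb : ReachesAbove f ρ c b) : ¬ IsBetweenAtoms b :=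
  hρ.coDual.not_isBetweenAtoms_of_reachesBelow hD hc hb ha hbc hac hcb hca

end PicksPrivatePoints

section Atomistic

variable [Finite L] [IsAtomistic L]

theorem exists_atom_le_sup_of_drel (hf : Function.Injective f) {a b : L} (ha : IsAtom a)
    (hb : IsAtom b) (h : DRel a b) : ∃ e, IsAtom e ∧ e ≠ a ∧ e ≠ b ∧ a ≤ b ⊔ e := by
  obtain ⟨hab, x, hax, hx⟩ := (drel_iff_of_isAtom hb).1 h
  have hnb : ¬ a ≤ b := fun h => hab ((hb.le_iff_eq ha.1).1 h)
  obtain ⟨b', e, hb', he, hb'b, hex, hle⟩ := exists_atoms_le_sup f hf ha hax hnb hx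
  obtain rfl := (hb.le_iff_eq hb'.1).1 hb'b
  exact ⟨e, he, fun h => hx (h ▸ hex), fun h => hnb (by rwa [h, sup_idem] at hle), hle⟩

theorem isBetweenAtoms_of_drel (hf : Function.Injective f) {a b : L} (ha : IsAtom a)
    (hb : IsAtom b) (h : DRel a b) : IsBetweenAtoms a :=
  have ⟨e, he, hea, _, hle⟩ := exists_atom_le_sup_of_drel f hf ha hb h
  ⟨b, e, hb, he, h.1.symm, hea, hle⟩

theorem not_drel_of_drel (hf : Function.Injective f)
    (hD : ∀ a b : L, IsAtom a → IsAtom b → DRel a b → ¬ DRel b a) {a b c : L} (ha : IsAtom a)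
    (hb : IsAtom b) (hc : IsAtom c) (hab : DRel a b) : ¬ DRel b c := by
  intro hbc
  have : Nonempty P := ⟨(exists_mem_map_not_mem_map_bot f hf ha).choose⟩
  obtain ⟨ρ, hρ⟩ := exists_picksPrivatePoints f hf
  obtain ⟨e, he, hea, -, hle⟩ := exists_atom_le_sup_of_drel f hf ha hb hab
  have hbetween := isBetweenAtoms_of_drel f hf hb hc hbc
  rcases hρ.reachesBelow_and_reachesAbove_of_le_sup ha hb he hab.1.symm hea hle with h | h
  · exact hρ.not_isBetweenAtoms_of_reachesBelow hD ha hb he hab.1.symm hea h.1 h.2 hbetween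
  · exact hρ.not_isBetweenAtoms_of_reachesAbove hD ha he hb hea hab.1.symm h.1 h.2 hbetween

end Atomistic

end Embedding

inductive ThreeLevel {M N : Type*} (lo hi : M → N → Prop)
  | bot (a : N)
  | mid (c : M)
  | top (b : N)

namespace ThreeLevel

variable {M N : Type*} {lo hi : M → N → Prop}

def rank : ThreeLevel lo hi → ℕ
  | bot _ => 0
  | mid _ => 1
  | top _ => 2

protected def Lt : ThreeLevel lo hi → ThreeLevel lo hi → Prop
  | bot a, mid c => lo c a
  | mid c, top b => hi c b
  | bot a, top b => ∃ c, lo c a ∧ hi c b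
  | _, _ => False

theorem rank_lt_rank {x y : ThreeLevel lo hi} (h : ThreeLevel.Lt x y) : rank x < rank y := by
  cases x <;> cases y <;> first | exact h.elim | simp [rank]

instance : IsStrictOrder (ThreeLevel lo hi) ThreeLevel.Lt where
  irrefl _ h := (rank_lt_rank h).false
  trans x y z hxy hyz := by
    cases x <;> cases y <;> cases z <;>
      first | exact hxy.elim | exact hyz.elim | exact ⟨_, hxy, hyz⟩

instance : PartialOrder (ThreeLevel lo hi) := partialOrderOfSO ThreeLevel.Lt

theorem eq_mid_of_lt_of_lt {x y z : ThreeLevel lo hi} (hxy : x < y) (hyz : y < z) :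
    ∃ a c b, x = bot a ∧ y = mid c ∧ z = top b ∧ lo c a ∧ hi c b := by
  cases x <;> cases y <;> cases z <;>
    first | exact hxy.elim | exact hyz.elim | exact ⟨_, _, _, rfl, rfl, rfl, hxy, hyz⟩

theorem lengthLE_two : lengthLE (ThreeLevel lo hi) 2 := by
  intro C hC
  have hinj : Set.InjOn rank (C : Set (ThreeLevel lo hi)) := by
    intro x hx y hy hxy
    by_contra hne
    rcases hC hx hy hne with (rfl | h) | (rfl | h)
    exacts [hne rfl, (rank_lt_rank h).ne hxy, hne rfl, (rank_lt_rank h).ne' hxy]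
  have hrank : ∀ x ∈ C, rank x ∈ Finset.range 3 := by
    rintro (_ | _ | _) - <;> simp [rank]
  simpa using Finset.card_le_card_of_injOn rank hrank hinj

end ThreeLevel

section AtomPoset

variable {L P : Type*} [Lattice L] [OrderBot L] [PartialOrder P] (f : LatticeHom L (Co P))
  (ρ : L → P)

abbrev AtomPoset : Type _ :=
  ThreeLevel (fun (c : {c : L // IsAtom c}) (a : {a : L // IsAtom a ∧ ¬ IsBetweenAtoms a}) =>
    ReachesBelow f ρ c a) (fun c b => ReachesAbove f ρ c b)

variable {f ρ}

def AtomPoset.atom : AtomPoset f ρ → L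
  | .bot a => a
  | .mid c => c
  | .top b => b

theorem AtomPoset.isAtom_atom : ∀ q : AtomPoset f ρ, IsAtom q.atom
  | .bot a => a.2.1
  | .mid c => c.2
  | .top b => b.2.1

theorem PicksPrivatePoints.ordConnected_setOf_atom_le (hρ : PicksPrivatePoints f ρ) (x : L) :
    {q : AtomPoset f ρ | q.atom ≤ x}.OrdConnected := by
  refine ⟨fun u hu v hv z ⟨huz, hzv⟩ => ?_⟩
  obtain rfl | huz := huz.eq_or_lt
  · exact hu
  obtain rfl | hzv := hzv.eq_or_lt'
  · exact hv
  obtain ⟨a, c, b, rfl, rfl, rfl, hca, hcb⟩ := ThreeLevel.eq_mid_of_lt_of_lt huz hzv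
  exact (hρ.le_sup c.2 hca hcb).trans (sup_le hu hv)

variable [Finite L] [IsAtomistic L]

theorem PicksPrivatePoints.exists_lt_lt_of_atom_le_sup (hf : Function.Injective f)
    (hρ : PicksPrivatePoints f ρ) (hD : ∀ a b : L, IsAtom a → IsAtom b → DRel a b → ¬ DRel b a)
    {x y : L} {z : AtomPoset f ρ} (h : z.atom ≤ x ⊔ y) (hx : ¬ z.atom ≤ x)
    (hy : ¬ z.atom ≤ y) : ∃ u v : AtomPoset f ρ, u < z ∧ z < v ∧
      (u.atom ≤ x ∧ v.atom ≤ y ∨ u.atom ≤ y ∧ v.atom ≤ x) := by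
  obtain ⟨a, b, ha, hb, hax, hby, hab⟩ := exists_atoms_le_sup f hf z.isAtom_atom h hx hy
  have hac : a ≠ z.atom := fun e => hx (e ▸ hax)
  have hbc : b ≠ z.atom := fun e => hy (e ▸ hby)
  have hbetween : IsBetweenAtoms z.atom := ⟨a, b, ha, hb, hac, hbc, hab⟩
  obtain ⟨c, rfl⟩ : ∃ c, z = .mid c := by
    rcases z with a' | c | b'
    exacts [absurd hbetween a'.2.2, ⟨c, rfl⟩, absurd hbetween b'.2.2]
  rcases hρ.reachesBelow_and_reachesAbove_of_le_sup c.2 ha hb hac hbc hab with h | h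
  · refine ⟨.bot ⟨a, ha, ?_⟩, .top ⟨b, hb, ?_⟩, h.1, h.2, Or.inl ⟨hax, hby⟩⟩
    · exact hρ.not_isBetweenAtoms_of_reachesBelow hD c.2 ha hb hac hbc h.1 h.2
    · exact hρ.not_isBetweenAtoms_of_reachesAbove hD c.2 ha hb hac hbc h.1 h.2
  · refine ⟨.bot ⟨b, hb, ?_⟩, .top ⟨a, ha, ?_⟩, h.1, h.2, Or.inr ⟨hby, hax⟩⟩
    · exact hρ.not_isBetweenAtoms_of_reachesBelow hD c.2 hb ha hbc hac h.1 h.2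
    · exact hρ.not_isBetweenAtoms_of_reachesAbove hD c.2 hb ha hbc hac h.1 h.2

def PicksPrivatePoints.atomPosetEmbedding (hf : Function.Injective f)
    (hρ : PicksPrivatePoints f ρ)
    (hD : ∀ a b : L, IsAtom a → IsAtom b → DRel a b → ¬ DRel b a) :
    LatticeHom L (Co (AtomPoset f ρ)) where
  toFun x := ⟨{q | q.atom ≤ x}, hρ.ordConnected_setOf_atom_le x⟩
  map_sup' x y := by
    refine le_antisymm (fun (z : AtomPoset f ρ) (hz : z.atom ≤ x ⊔ y) => ?_)
      (sup_le (fun z hz => le_sup_of_le_left hz) (fun z hz => le_sup_of_le_right hz))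
    by_cases hx : z.atom ≤ x
    · exact Co.mem_of_le le_sup_left hx
    by_cases hy : z.atom ≤ y
    · exact Co.mem_of_le le_sup_right hy
    obtain ⟨u, v, hu, hv, h | h⟩ := hρ.exists_lt_lt_of_atom_le_sup hf hD hz hx hy
    · exact Co.mem_sup.2 ⟨u, Or.inl h.1, v, Or.inr h.2, hu.le, hv.le⟩
    · exact Co.mem_sup.2 ⟨u, Or.inr h.1, v, Or.inl h.2, hu.le, hv.le⟩
  map_inf' x y := Subtype.ext <| Set.ext fun _ => (Co.mem_inf.trans le_inf_iff.symm).symm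

theorem PicksPrivatePoints.atomPosetEmbedding_injective (hf : Function.Injective f)
    (hρ : PicksPrivatePoints f ρ)
    (hD : ∀ a b : L, IsAtom a → IsAtom b → DRel a b → ¬ DRel b a) :
    Function.Injective (hρ.atomPosetEmbedding hf hD) := fun _ _ h =>
  eq_iff_atom_le_iff.2 fun c hc => Iff.of_eq (congrArg (ThreeLevel.mid ⟨c, hc⟩ ∈ ·) h)

end AtomPoset

theorem exists_lengthLE_two_embedding.{u} {L P : Type u} [Lattice L] [OrderBot L] [Finite L]
    [IsAtomistic L] [PartialOrder P] (f : LatticeHom L (Co P)) (hf : Function.Injective f)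
    (hD : ∀ a b : L, IsAtom a → IsAtom b → DRel a b → ¬ DRel b a) :
    ∃ (Q : Type u) (_ : PartialOrder Q), lengthLE Q 2 ∧
      ∃ g : LatticeHom L (Co Q), Function.Injective g := by
  cases isEmpty_or_nonempty P
  · exact ⟨P, _, fun C _ => by simp [Finset.eq_empty_of_isEmpty C], f, hf⟩
  obtain ⟨ρ, hρ⟩ := exists_picksPrivatePoints f hf
  exact ⟨AtomPoset f ρ, _, ThreeLevel.lengthLE_two, _, hρ.atomPosetEmbedding_injective hf hD⟩

theorem stmt6.{u} (L : Type u) [Lattice L] [OrderBot L] [Finite L]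
    (hatom : ∀ a : L, IsLUB {x : L | IsAtom x ∧ x ≤ a} a)
    (hno2cycle : ¬ ∃ a b : L, JIrr a ∧ JIrr b ∧ DRel a b ∧ DRel b a)
    (hsub : ∃ (P : Type u) (_ : PartialOrder P),
      ∃ f : LatticeHom L (Co P), Function.Injective f) :
    (∃ (Q : Type u) (_ : PartialOrder Q), lengthLE Q 2 ∧
      ∃ f : LatticeHom L (Co Q), Function.Injective f) ∧
    ¬ ∃ (k : ℕ) (p : ℕ → L), 0 < k ∧ (∀ i ≤ k, JIrr (p i)) ∧
        (∀ i < k, DRel (p i) (p (i + 1))) ∧ p k = p 0 := by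
  obtain ⟨P, _, f, hf⟩ := hsub
  have : IsAtomistic L := ⟨fun a => ⟨_, hatom a, fun _ h => h.1⟩⟩
  have hD : ∀ a b : L, IsAtom a → IsAtom b → DRel a b → ¬ DRel b a := fun a b ha hb hab hba =>
    hno2cycle ⟨a, b, ha.jIrr, hb.jIrr, hab, hba⟩
  exact ⟨exists_lengthLE_two_embedding f hf hD,
    not_exists_drel_cycle fun _ _ _ ha hb hc => not_drel_of_drel f hf hD ha hb hc⟩
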